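/- For k = 2, the bi-infinite repetition of the block JGHI is a temporally periodic state of period exactly two: the configuration s : ℤ → {−1, 1} of spatial period 4 given on one period by (s(0), s(1), s(2), s(3)) = (1, −1, −1, 1) satisfies T(s)(i) = s(i + 2) for all i (the update shifts the pattern by two sites), and hence T(T(s)) = s while T(s) ≠ s. -/

import Mathlib

/-- The sum of site values over the neighborhood `[i-k, i+k]`. -/
noncomputable def nbhdSum (k : ℕ) (s : ℤ → ℤ) (i : ℤ) : ℤ :=
  ∑ α ∈ Finset.Icc (-(k : ℤ)) (k : ℤ), s (i + α)

/-- One step of the majority-rule cellular automaton with `2k` neighbors. -/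
noncomputable def update (k : ℕ) (s : ℤ → ℤ) : ℤ → ℤ :=
  fun i =>
    if 0 < nbhdSum k s i then 1
    else if nbhdSum k s i < 0 then -1
    else s i

lemma nbhd_eq (s : ℤ → ℤ) (i : ℤ) :
    nbhdSum 2 s i = s (i + -2) + s (i + -1) + s (i + 0) + s (i + 1) + s (i + 2) := by
  have h : Finset.Icc (-(2:ℤ)) 2 = {-2, -1, 0, 1, 2} := by decide
  rw [nbhdSum]
  norm_num [h, Finset.sum_insert, Finset.mem_insert]
  ring

set_option maxHeartbeats 1000000 in
/-- For `k = 2`, the bi-infinite repetition of the block `JGHI`, i.e. the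
spatial-period-4 configuration `(+,-,-,+)`, is shifted by two sites under one
update step, hence is temporally periodic of period exactly two. -/
theorem JGHI_period_two (s : ℤ → ℤ)
    (hper : ∀ i : ℤ, s (i + 4) = s i)
    (h0 : s 0 = 1) (h1 : s 1 = -1) (h2 : s 2 = -1) (h3 : s 3 = 1) :
    (∀ i : ℤ, update 2 s i = s (i + 2)) ∧
    update 2 (update 2 s) = s ∧ update 2 s ≠ s := by
  have hm : ∀ n : ℤ, ∀ x : ℤ, s (x + 4 * n) = s x := by
    intro n
    induction n using Int.induction_on with
    | zero => simp
    | succ n ih =>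
      intro x
      have e : x + 4 * ((n : ℤ) + 1) = (x + 4 * n) + 4 := by ring
      rw [e, hper, ih]
    | pred n ih =>
      intro x
      have e : (x + 4 * (-(n : ℤ) - 1)) + 4 = x + 4 * (-(n : ℤ)) := by ring
      have := hper (x + 4 * (-(n : ℤ) - 1))
      rw [e] at this
      rw [← this]
      exact ih x
  have hval : ∀ j : ℤ, s j = s (j % 4) := by
    intro j
    have e : j % 4 + 4 * (j / 4) = j := by omega
    conv_lhs => rw [← e]
    exact hm (j / 4) (j % 4)
  have hkey : ∀ i : ℤ, update 2 s i = s (i + 2) := by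
    intro i
    have hr : i % 4 = 0 ∨ i % 4 = 1 ∨ i % 4 = 2 ∨ i % 4 = 3 := by omega
    have hs : ∀ a : ℤ, s (i + a) = s ((i + a) % 4) := fun a => hval (i + a)
    unfold update
    rcases hr with h | h | h | h <;>
    · rw [nbhd_eq, hs (-2), hs (-1), hs 0, hs 1, hs 2]
      have e2 : (i + -2) % 4 = (2 + i % 4) % 4 := by omega
      have e1 : (i + -1) % 4 = (3 + i % 4) % 4 := by omega
      have e0 : (i + 0) % 4 = i % 4 := by omega
      have f1 : (i + 1) % 4 = (1 + i % 4) % 4 := by omega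
      have f2 : (i + 2) % 4 = (2 + i % 4) % 4 := by omega
      rw [e2, e1, e0, f1, f2, h]
      norm_num [h0, h1, h2, h3]
  refine ⟨hkey, ?_, ?_⟩
  · funext i
    have hu : update 2 s = fun j => s (j + 2) := funext hkey
    rw [hu]
    have hn2 : nbhdSum 2 (fun j => s (j + 2)) i = nbhdSum 2 s (i + 2) := by
      unfold nbhdSum
      apply Finset.sum_congr rfl
      intro a _
      ring_nf
    show (if 0 < nbhdSum 2 (fun j => s (j + 2)) i then (1:ℤ)
        else if nbhdSum 2 (fun j => s (j + 2)) i < 0 then -1 else s (i + 2)) = s i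
    rw [hn2]
    have : update 2 s (i + 2) = s i := by
      rw [hkey, show i + 2 + 2 = i + 4 by ring, hper]
    rw [← this]
    rfl
  · intro h
    have := congrFun h 0
    rw [hkey 0] at this
    have h2' : s 2 = s 0 := by simpa using this
    rw [h2, h0] at h2'
    norm_num at h2'
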